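/- Let M = (E, r) be a finite matroid satisfying R(k,m) for some m ≥ k ≥ 1, with normalized rank function ρ = r/r(E). Then the Hausdorff distance between T_k(ρ) and T_k^Δ(ρ) is at most k·m/r(E), where T_k^Δ(ρ) is the set of k-crops over tuples of pairwise disjoint sets. -/

import Mathlib

/-- The rank of a set `X` in a matroid `M`: the largest cardinality of an independent
subset of `X`. -/
noncomputable def mrk {α : Type*} (M : Matroid α) (X : Set α) : ℕ :=
  sSup (Set.ncard '' {I | M.Indep I ∧ I ⊆ X})

/-- The set `T_k(ρ)` of `k`-crops of the normalized rank function `ρ = r/c` of a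
matroid `M`, over arbitrary `k`-tuples of subsets of the ground set. -/
noncomputable def matCrops {α : Type*} (M : Matroid α) (c : ℝ) (k : ℕ) :
    Set (Finset (Fin k) → ℝ) :=
  {ψ | ∃ A : Fin k → Set α, (∀ i, A i ⊆ M.E) ∧
      ψ = fun I => (mrk M (⋃ i ∈ I, A i) : ℝ) / c}

/-- The set `T_k^Δ(ρ)`: `k`-crops over tuples of pairwise disjoint subsets of the
ground set. -/
noncomputable def matCropsDisj {α : Type*} (M : Matroid α) (c : ℝ) (k : ℕ) :
    Set (Finset (Fin k) → ℝ) :=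
  {ψ | ∃ A : Fin k → Set α, (∀ i, A i ⊆ M.E) ∧ Pairwise (Function.onFun Disjoint A) ∧
      ψ = fun I => (mrk M (⋃ i ∈ I, A i) : ℝ) / c}

/-!
Every crop over disjoint sets is a crop, so only one direction of the Hausdorff bound has
content: given `A₁, …, A_k`, we need pairwise disjoint `B₁, …, B_k` such that the rank of every
union of `Aᵢ`'s differs from that of the corresponding union of `Bᵢ`'s by at most `k·m`.
We take `Bᵢ` independent inside `cl(Aᵢ)`; by submodularity, replacing `Aᵢ` by `Bᵢ` in any
union lowers its rank by at most the defect `r(Aᵢ) - |Bᵢ|`, so it suffices that the total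
defect is at most `k·m`. By Edmonds' matroid partition theorem, applied to the restrictions of
`M` to the flats `cl(Aᵢ)`, this holds as soon as `∑ᵢ r(X ∩ cl(Aᵢ)) + |E \ X| + k·m ≥ ∑ᵢ r(Aᵢ)`
for every `X ⊆ E`; and `R(k,m)`, applied to the flats `cl(X ∩ cl(Aᵢ)) ⊆ cl(Aᵢ)`, bounds each
`k·(r(Aᵢ) - r(X ∩ cl(Aᵢ)))` by `|E \ X| + k·m`.
-/

open Set Function

namespace Matroid

variable {α : Type*} {M : Matroid α} {A I J X Y D : Set α} {e : α}

section Rank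

variable [M.RankFinite]

lemma IsBasis'.mrk_eq_ncard (hI : M.IsBasis' I X) : mrk M X = I.ncard := by
  refine IsGreatest.csSup_eq ⟨⟨I, ⟨hI.indep, hI.subset⟩, rfl⟩, ?_⟩
  rintro _ ⟨J, ⟨hJ, hJX⟩, rfl⟩
  have h := hJ.encard_le_eRk_of_subset hJX
  rw [← hI.encard_eq_eRk, ← hJ.finite.cast_ncard_eq, ← hI.indep.finite.cast_ncard_eq] at h
  exact_mod_cast h

lemma cast_mrk (X : Set α) : (mrk M X : ℕ∞) = M.eRk X := by
  obtain ⟨I, hI⟩ := M.exists_isBasis' X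
  rw [hI.mrk_eq_ncard, hI.indep.finite.cast_ncard_eq, hI.encard_eq_eRk]

lemma mrk_mono (h : X ⊆ Y) : mrk M X ≤ mrk M Y := by
  exact_mod_cast (cast_mrk X).trans_le <| (M.eRk_mono h).trans_eq (cast_mrk Y).symm

lemma mrk_closure (X : Set α) : mrk M (M.closure X) = mrk M X := by
  exact_mod_cast (cast_mrk _).trans <| (M.eRk_closure_eq X).trans (cast_mrk X).symm

lemma mrk_union_closure_right (X Y : Set α) : mrk M (X ∪ M.closure Y) = mrk M (X ∪ Y) := by
  exact_mod_cast (cast_mrk _).trans <| (M.eRk_union_closure_right_eq X Y).trans (cast_mrk _).symm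

lemma mrk_inter_add_mrk_union_le (X Y : Set α) :
    mrk M (X ∩ Y) + mrk M (X ∪ Y) ≤ mrk M X + mrk M Y := by
  have h := M.eRk_inter_add_eRk_union_le X Y
  simp only [← cast_mrk] at h
  exact_mod_cast h

@[simp] lemma mrk_empty : mrk M ∅ = 0 := by
  exact_mod_cast (cast_mrk (M := M) ∅).trans M.eRk_empty

lemma mrk_singleton_le (e : α) : mrk M {e} ≤ 1 := by
  exact_mod_cast (cast_mrk _).trans_le (M.eRk_singleton_le e)

lemma Indep.ncard_le_mrk (hI : M.Indep I) (hIX : I ⊆ X) : I.ncard ≤ mrk M X := by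
  have h := hI.encard_le_eRk_of_subset hIX
  rwa [← hI.finite.cast_ncard_eq, ← cast_mrk, Nat.cast_le] at h

lemma Indep.mrk_eq_ncard (hI : M.Indep I) : mrk M I = I.ncard :=
  hI.isBasis_self.isBasis'.mrk_eq_ncard

lemma Indep.isBasis'_of_mrk_le (hI : M.Indep I) (hIX : I ⊆ X) (h : mrk M X ≤ I.ncard) :
    M.IsBasis' I X := by
  refine hI.isBasis'_of_eRk_ge hI.finite hIX ?_
  rw [← cast_mrk, ← cast_mrk, hI.mrk_eq_ncard]
  exact_mod_cast h

lemma exists_isNonloop_of_mrk_pos (h : 0 < mrk M X) : ∃ e ∈ X, M.IsNonloop e := by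
  obtain ⟨I, hI⟩ := M.exists_isBasis' X
  obtain ⟨e, he⟩ := nonempty_of_ncard_ne_zero (hI.mrk_eq_ncard ▸ h.ne')
  exact ⟨e, hI.subset he, hI.indep.isNonloop_of_mem he⟩

lemma mrk_restrict (R X : Set α) : mrk (M ↾ R) X = mrk M (X ∩ R) := by
  exact_mod_cast (cast_mrk _).trans <| (M.restrict_eRk_eq' R X).trans (cast_mrk _).symm

lemma mrk_le_mrk_delete (h : Disjoint X D) : mrk M X ≤ mrk (M ＼ D) X := by
  obtain ⟨I, hI⟩ := M.exists_isBasis' X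
  rw [hI.mrk_eq_ncard]
  exact (hI.indep.indep_delete_of_disjoint (h.mono_left hI.subset)).ncard_le_mrk hI.subset

lemma mrk_union_le_mrk_add_mrk_contract (X Y : Set α) :
    mrk M (X ∪ Y) ≤ mrk M X + mrk (M ／ X) Y := by
  obtain ⟨J, hJ⟩ := M.exists_isBasis' X
  obtain ⟨K, hK, hJK⟩ := hJ.indep.subset_isBasis'_of_subset (subset_union_left (t := Y))
  have hKJY : K \ J ⊆ Y := fun x hx => (hK.subset hx.1).resolve_left hx.2
  have hXK : Disjoint X (K \ J) := disjoint_left.2 fun x hxX hxK =>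
    hJ.insert_not_indep ⟨hxX, hxK.2⟩ (hK.indep.subset (insert_subset hxK.1 hJK))
  have hKJ : (M ／ X).Indep (K \ J) :=
    hJ.contract_indep_iff.2 ⟨by rw [sdiff_union_of_subset hJK]; exact hK.indep, hXK⟩
  have hcard : (K \ J).ncard + J.ncard = K.ncard :=
    ncard_sdiff_add_ncard_of_subset hJK hK.indep.finite
  have hrk : mrk M (X ∪ Y) = mrk M (J ∪ Y) := by
    exact_mod_cast (cast_mrk _).trans <| (hJ.eRk_eq_eRk_union Y).symm.trans (cast_mrk _).symm
  rw [hrk, hK.mrk_eq_ncard, hJ.mrk_eq_ncard]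
  have := hKJ.ncard_le_mrk hKJY
  omega

lemma Indep.mrk_union_add_ncard_le (hI : M.Indep I) (hIA : I ⊆ M.closure A)
    (X : Set α) : mrk M (X ∪ A) + I.ncard ≤ mrk M (X ∪ I) + mrk M A := by
  have hsub := mrk_inter_add_mrk_union_le (M := M) (X ∪ I) (A ∪ I)
  have h₁ : mrk M (X ∪ A) ≤ mrk M ((X ∪ I) ∪ (A ∪ I)) :=
    mrk_mono (union_subset_union subset_union_left subset_union_left)
  have h₂ : I.ncard ≤ mrk M ((X ∪ I) ∩ (A ∪ I)) :=
    hI.ncard_le_mrk (subset_inter subset_union_right subset_union_right)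
  have h₃ : mrk M (A ∪ I) ≤ mrk M A :=
    calc mrk M (A ∪ I) ≤ mrk M (A ∪ M.closure A) := mrk_mono (union_subset_union_right A hIA)
      _ = mrk M A := by rw [mrk_union_closure_right, union_self]
  omega

lemma mrk_union_biUnion_add_sum_le {ι : Type*} {A I : ι → Set α}
    (hI : ∀ i, M.Indep (I i)) (hIA : ∀ i, I i ⊆ M.closure (A i)) (s : Finset ι) (X : Set α) :
    mrk M (X ∪ ⋃ i ∈ s, A i) + ∑ i ∈ s, (I i).ncard ≤
      mrk M (X ∪ ⋃ i ∈ s, I i) + ∑ i ∈ s, mrk M (A i) := by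
  classical
  induction s using Finset.induction_on generalizing X with
  | empty => simp
  | insert j s hj ih =>
    have h₁ := (hI j).mrk_union_add_ncard_le (hIA j) (X ∪ ⋃ i ∈ s, A i)
    have h₂ := ih (X ∪ I j)
    simp only [Finset.set_biUnion_insert, Finset.sum_insert hj]
    rw [show X ∪ (A j ∪ ⋃ i ∈ s, A i) = (X ∪ ⋃ i ∈ s, A i) ∪ A j by ac_rfl,
      show X ∪ (I j ∪ ⋃ i ∈ s, I i) = (X ∪ I j) ∪ ⋃ i ∈ s, I i by ac_rfl]
    rw [show (X ∪ ⋃ i ∈ s, A i) ∪ I j = (X ∪ I j) ∪ ⋃ i ∈ s, A i by ac_rfl] at h₁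
    omega

end Rank

section Partition

variable {ι : Type*} {Ms : ι → Matroid α} {G : Set α} {N : ℕ}

def contractAt [DecidableEq ι] (Ms : ι → Matroid α) (i₀ : ι) (e : α) : ι → Matroid α :=
  fun i => if i = i₀ then Ms i ／ {e} else Ms i ＼ {e}

lemma contractAt_ground_subset [DecidableEq ι] (hE : ∀ i, (Ms i).E ⊆ G) (i₀ i : ι) :
    (contractAt Ms i₀ e i).E ⊆ G \ {e} := by
  unfold contractAt
  split_ifs
  · exact sdiff_subset_sdiff_left (hE i)
  · exact sdiff_subset_sdiff_left (hE i)

instance [DecidableEq ι] [∀ i, (Ms i).RankFinite] (i₀ : ι) (e : α) (i : ι) :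
    (contractAt Ms i₀ e i).RankFinite := by
  unfold contractAt
  split_ifs <;> infer_instance

lemma mrk_le_mrk_contractAt_add [DecidableEq ι] [∀ i, (Ms i).RankFinite] (i₀ : ι) (heY : e ∉ Y)
    (i : ι) : mrk (Ms i) Y ≤ mrk (contractAt Ms i₀ e i) Y + if i = i₀ then 1 else 0 := by
  unfold contractAt
  split_ifs
  · calc mrk (Ms i) Y ≤ mrk (Ms i) ({e} ∪ Y) := mrk_mono subset_union_right
      _ ≤ mrk (Ms i) {e} + mrk (Ms i ／ {e}) Y := mrk_union_le_mrk_add_mrk_contract _ _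
      _ ≤ mrk (Ms i ／ {e}) Y + 1 := by have := mrk_singleton_le (M := Ms i) e; omega
  · exact mrk_le_mrk_delete (disjoint_singleton_right.2 heY)

variable [Fintype ι]

def PartitionBound (Ms : ι → Matroid α) (G : Set α) (N : ℕ) : Prop :=
  ∀ X ⊆ G, N ≤ ∑ i, mrk (Ms i) X + (G \ X).ncard

def HasDisjointIndep (Ms : ι → Matroid α) (N : ℕ) : Prop :=
  ∃ I : ι → Set α, (∀ i, (Ms i).Indep (I i)) ∧ Pairwise (Disjoint on I) ∧ N ≤ ∑ i, (I i).ncard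

lemma HasDisjointIndep.mono {N' : ℕ} (h : HasDisjointIndep Ms N) (hN : N' ≤ N) :
    HasDisjointIndep Ms N' :=
  let ⟨I, hI, hdisj, hle⟩ := h
  ⟨I, hI, hdisj, hN.trans hle⟩

variable [∀ i, (Ms i).RankFinite]

lemma PartitionBound.restrict (h : PartitionBound Ms G N) (hG : G.Finite) (hXG : X ⊆ G)
    (htight : ∑ i, mrk (Ms i) X + (G \ X).ncard ≤ N) :
    PartitionBound (fun i => Ms i ↾ X) X (∑ i, mrk (Ms i) X) := by
  intro Y hYX
  have hY := h Y (hYX.trans hXG)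
  simp only [mrk_restrict, inter_eq_left.2 hYX]
  have h₁ := ncard_sdiff_add_ncard_of_subset (hYX.trans hXG) hG
  have h₂ := ncard_sdiff_add_ncard_of_subset hXG hG
  have h₃ := ncard_sdiff_add_ncard_of_subset hYX (hG.subset hXG)
  omega

lemma PartitionBound.contract (h : PartitionBound Ms G N) (hXG : X ⊆ G)
    (htight : ∑ i, mrk (Ms i) X + (G \ X).ncard ≤ N) :
    PartitionBound (fun i => Ms i ／ X) (G \ X) (G \ X).ncard := by
  intro Y hY
  dsimp only
  have hXY := h (X ∪ Y) (union_subset hXG (hY.trans sdiff_subset))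
  rw [← sdiff_sdiff] at hXY
  have hsum : ∑ i, mrk (Ms i) (X ∪ Y) ≤ ∑ i, mrk (Ms i) X + ∑ i, mrk (Ms i ／ X) Y := by
    rw [← Finset.sum_add_distrib]
    exact Finset.sum_le_sum fun i _ => mrk_union_le_mrk_add_mrk_contract X Y
  omega

lemma PartitionBound.contractAt [DecidableEq ι] (h : PartitionBound Ms G N) (hG : G.Finite)
    (heG : e ∈ G) (hstrict : ∀ X ⊂ G, X.Nonempty → N < ∑ i, mrk (Ms i) X + (G \ X).ncard)
    (i₀ : ι) : PartitionBound (Matroid.contractAt Ms i₀ e) (G \ {e}) (N - 1) := by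
  have hGe := ncard_sdiff_singleton_add_one heG hG
  intro Y hY
  obtain rfl | hYne := Y.eq_empty_or_nonempty
  · have h₀ := h ∅ (empty_subset G)
    simp only [mrk_empty, Finset.sum_const_zero, sdiff_empty, zero_add] at h₀ ⊢
    omega
  have heY : e ∉ Y := fun he => (hY he).2 rfl
  have hsum : ∑ i, mrk (Ms i) Y ≤ ∑ i, mrk (Matroid.contractAt Ms i₀ e i) Y + 1 := by
    calc ∑ i, mrk (Ms i) Y
        ≤ ∑ i, (mrk (Matroid.contractAt Ms i₀ e i) Y + if i = i₀ then 1 else 0) :=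
          Finset.sum_le_sum fun i _ => mrk_le_mrk_contractAt_add i₀ heY i
      _ = ∑ i, mrk (Matroid.contractAt Ms i₀ e i) Y + 1 := by simp [Finset.sum_add_distrib]
  have hGY : ((G \ {e}) \ Y).ncard + 1 = (G \ Y).ncard := by
    rw [sdiff_sdiff_comm]
    exact ncard_sdiff_singleton_add_one ⟨heG, heY⟩ hG.sdiff
  have := hstrict Y ⟨hY.trans sdiff_subset, fun hGY => heY (hGY heG)⟩ hYne
  omega

lemma HasDisjointIndep.of_restrict_of_contract {N' : ℕ}
    (h₁ : HasDisjointIndep (fun i => Ms i ↾ X) (∑ i, mrk (Ms i) X))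
    (h₂ : HasDisjointIndep (fun i => Ms i ／ X) N') :
    HasDisjointIndep Ms (∑ i, mrk (Ms i) X + N') := by
  obtain ⟨J, hJ, hJdisj, hJsum⟩ := h₁
  obtain ⟨K, hK, hKdisj, hKsum⟩ := h₂
  have hJX (i : ι) : J i ⊆ X := (hJ i).subset_ground
  have hJle (i : ι) : (J i).ncard ≤ mrk (Ms i) X := (hJ i).of_restrict.ncard_le_mrk (hJX i)
  have hJeq := (Finset.sum_eq_sum_iff_of_le fun i _ => hJle i).1 (hJsum.antisymm' <|
    Finset.sum_le_sum fun i _ => hJle i)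
  have hJbasis (i : ι) : (Ms i).IsBasis' (J i) X :=
    (hJ i).of_restrict.isBasis'_of_mrk_le (hJX i) (hJeq i (Finset.mem_univ i)).ge
  have hJK (i : ι) : (Ms i).Indep (K i ∪ J i) ∧ Disjoint X (K i) :=
    (hJbasis i).contract_indep_iff.1 (hK i)
  have hdisj (i j : ι) : Disjoint (J i) (K j) := (hJK j).2.mono_left (hJX i)
  refine ⟨fun i => J i ∪ K i, fun i => by dsimp only; rw [union_comm]; exact (hJK i).1, ?_, ?_⟩
  · intro i j hij
    exact disjoint_union_left.2 ⟨disjoint_union_right.2 ⟨hJdisj hij, hdisj i j⟩,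
      disjoint_union_right.2 ⟨(hdisj j i).symm, hKdisj hij⟩⟩
  · have hcard (i : ι) : (J i ∪ K i).ncard = (J i).ncard + (K i).ncard :=
      ncard_union_eq (hdisj i i) (hJ i).of_restrict.finite (hK i).of_contract.finite
    simp only [hcard, Finset.sum_add_distrib]
    omega

lemma HasDisjointIndep.of_contractAt [DecidableEq ι] {i₀ : ι} (he : (Ms i₀).IsNonloop e)
    (h : HasDisjointIndep (contractAt Ms i₀ e) (N - 1)) : HasDisjointIndep Ms N := by
  obtain ⟨I, hI, hdisj, hsum⟩ := h
  have hinsert (i : ι) :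
      (Ms i).Indep (if i = i₀ then insert e (I i) else I i) ∧ e ∉ I i := by
    have := hI i
    unfold contractAt at this
    split_ifs at this ⊢ with hi
    · subst hi
      exact (he.contractElem_indep_iff.1 this).symm
    · exact deleteElem_indep_iff.1 this
  refine ⟨fun i => if i = i₀ then insert e (I i) else I i, fun i => (hinsert i).1, ?_, ?_⟩
  · intro i j hij
    simp only [onFun]
    split_ifs with hi hj hj
    · exact absurd (hi.trans hj.symm) hij
    · exact disjoint_insert_left.2 ⟨(hinsert j).2, hdisj hij⟩
    · exact disjoint_insert_right.2 ⟨(hinsert i).2, hdisj hij⟩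
    · exact hdisj hij
  · have hcard (i : ι) : (if i = i₀ then insert e (I i) else I i).ncard =
        (I i).ncard + if i = i₀ then 1 else 0 := by
      split_ifs
      · exact ncard_insert_of_notMem (hinsert i).2 (hI i).finite
      · rfl
    simp only [hcard, Finset.sum_add_distrib, Finset.sum_ite_eq', Finset.mem_univ, if_true]
    omega

/-- Edmonds' matroid partition theorem. By induction on `|G|`: a nonempty `X ⊂ G` at which the
bound is attained splits the problem into the restrictions to `X` and the contractions by `X`;
if there is none, contracting a nonloop `e` in one matroid and deleting it from the others costs
only one unit of the bound. -/
theorem hasDisjointIndep_of_partitionBound (hG : G.Finite) (hE : ∀ i, (Ms i).E ⊆ G)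
    (h : PartitionBound Ms G N) : HasDisjointIndep Ms N := by
  classical
  induction hn : G.ncard using Nat.strong_induction_on generalizing G Ms N with
  | _ n ih =>
  have : ∀ i, (Ms i).Finite := fun i => ⟨hG.subset (hE i)⟩
  obtain rfl | hN := N.eq_zero_or_pos
  · exact ⟨fun _ => ∅, fun i => (Ms i).empty_indep, fun _ _ _ => disjoint_empty _, Nat.zero_le _⟩
  by_cases htight : ∃ X ⊂ G, X.Nonempty ∧ ∑ i, mrk (Ms i) X + (G \ X).ncard ≤ N
  · obtain ⟨X, hXG, hX, hXN⟩ := htight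
    have h₁ := ih _ (hn ▸ ncard_lt_ncard hXG hG) (hG.subset hXG.subset) (fun _ => subset_rfl)
      (h.restrict hG hXG.subset hXN) rfl
    have hGX : G \ X ⊂ G := sdiff_ssubset_left_iff.2 (by rwa [inter_eq_right.2 hXG.subset])
    have h₂ := ih _ (hn ▸ ncard_lt_ncard hGX hG) hG.sdiff
      (fun i => sdiff_subset_sdiff_left (hE i)) (h.contract hXG.subset hXN) rfl
    exact (h₁.of_restrict_of_contract h₂).mono (h X hXG.subset)
  push Not at htight
  obtain ⟨i₀, -, hi₀⟩ := Finset.exists_ne_zero_of_sum_ne_zero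
    (by have := h G subset_rfl; rw [sdiff_self, ncard_empty] at this; omega :
      ∑ i, mrk (Ms i) G ≠ 0)
  obtain ⟨e, heG, he⟩ := exists_isNonloop_of_mrk_pos (Nat.pos_of_ne_zero hi₀)
  exact HasDisjointIndep.of_contractAt he <| ih _
    (hn ▸ ncard_lt_ncard (sdiff_singleton_ssubset.2 heG) hG) hG.sdiff
    (contractAt_ground_subset hE i₀) (h.contractAt hG heG htight i₀) rfl

end Partition

/-- Condition `R(k,m)`. -/
def SatisfiesR (M : Matroid α) (k m : ℕ) : Prop :=
  ∀ F A : Set α, M.IsFlat F → M.IsFlat A → F ⊆ A → m ≤ mrk M A →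
    k * (mrk M A - mrk M F) ≤ (A \ F).ncard

namespace SatisfiesR

variable [M.Finite] {k m : ℕ}

lemma mul_sub_mrk_inter_le (hR : M.SatisfiesR k m) {S : Set α} (hS : M.IsFlat S)
    (hX : X ⊆ M.E) : k * (mrk M S - mrk M (X ∩ S)) ≤ (M.E \ X).ncard + k * m := by
  by_cases hm : m ≤ mrk M S
  · have hFS : M.closure (X ∩ S) ⊆ S :=
      (M.closure_subset_closure inter_subset_right).trans hS.closure.le
    have hF := hR _ S (M.isFlat_closure _) hS hFS hm
    rw [mrk_closure] at hF
    have hcard : (S \ M.closure (X ∩ S)).ncard ≤ (M.E \ X).ncard :=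
      ncard_le_ncard (fun x hx => ⟨hS.subset_ground hx.1, fun hxX =>
        hx.2 (M.subset_closure _ (inter_subset_left.trans hX) ⟨hxX, hx.1⟩)⟩) M.ground_finite.sdiff
    omega
  · have : k * (mrk M S - mrk M (X ∩ S)) ≤ k * m := Nat.mul_le_mul_left k (by omega)
    omega

lemma sum_mrk_le (hR : M.SatisfiesR k m) {S : Fin k → Set α} (hS : ∀ i, M.IsFlat (S i))
    (hX : X ⊆ M.E) :
    ∑ i, mrk M (S i) ≤ ∑ i, mrk M (X ∩ S i) + (M.E \ X).ncard + k * m := by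
  obtain rfl | hk := k.eq_zero_or_pos
  · simp
  have hmul : k * ∑ i, (mrk M (S i) - mrk M (X ∩ S i)) ≤ k * ((M.E \ X).ncard + k * m) := by
    rw [Finset.mul_sum]
    calc ∑ i, k * (mrk M (S i) - mrk M (X ∩ S i)) ≤ ∑ _i : Fin k, ((M.E \ X).ncard + k * m) :=
          Finset.sum_le_sum fun i _ => hR.mul_sub_mrk_inter_le (hS i) hX
      _ = k * ((M.E \ X).ncard + k * m) := by simp
  have hdefect : ∑ i, mrk M (S i) ≤ ∑ i, mrk M (X ∩ S i) +
      ∑ i, (mrk M (S i) - mrk M (X ∩ S i)) := by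
    rw [← Finset.sum_add_distrib]
    exact Finset.sum_le_sum fun i _ => by omega
  have := Nat.le_of_mul_le_mul_left hmul hk
  omega

lemma partitionBound (hR : M.SatisfiesR k m) (A : Fin k → Set α) :
    PartitionBound (fun i => M ↾ M.closure (A i)) M.E (∑ i, mrk M (A i) - k * m) := by
  intro X hX
  have h := hR.sum_mrk_le (S := fun i => M.closure (A i)) (fun i => M.isFlat_closure _) hX
  simp only [mrk_restrict, mrk_closure] at h ⊢
  omega

theorem exists_disjoint_approx (hR : M.SatisfiesR k m) (A : Fin k → Set α) :
    ∃ B : Fin k → Set α, (∀ i, B i ⊆ M.E) ∧ Pairwise (Disjoint on B) ∧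
      ∀ s : Finset (Fin k), mrk M (⋃ i ∈ s, B i) ≤ mrk M (⋃ i ∈ s, A i) ∧
        mrk M (⋃ i ∈ s, A i) ≤ mrk M (⋃ i ∈ s, B i) + k * m := by
  obtain ⟨B, hB, hdisj, hsum⟩ := hasDisjointIndep_of_partitionBound M.ground_finite
    (fun i => M.closure_subset_ground (A i)) (hR.partitionBound A)
  simp only [restrict_indep_iff] at hB
  refine ⟨B, fun i => (hB i).1.subset_ground, hdisj, fun s => ⟨?_, ?_⟩⟩
  · calc mrk M (⋃ i ∈ s, B i) ≤ mrk M (M.closure (⋃ i ∈ s, A i)) :=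
          mrk_mono <| iUnion₂_subset fun i hi =>
            (hB i).2.trans (M.closure_subset_closure (subset_biUnion_of_mem hi))
      _ = mrk M (⋃ i ∈ s, A i) := mrk_closure _
  · have h := mrk_union_biUnion_add_sum_le (fun i => (hB i).1) (fun i => (hB i).2) s ∅
    simp only [empty_union] at h
    have hle : ∑ i ∈ sᶜ, (B i).ncard ≤ ∑ i ∈ sᶜ, mrk M (A i) :=
      Finset.sum_le_sum fun i _ => mrk_closure (M := M) (A i) ▸ (hB i).1.ncard_le_mrk (hB i).2
    have hB' := Finset.sum_add_sum_compl s fun i => (B i).ncard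
    have hA' := Finset.sum_add_sum_compl s fun i => mrk M (A i)
    omega

end SatisfiesR

end Matroid

lemma dist_natCast_div_le {a b r : ℕ} {c : ℝ} (hc : 0 ≤ c) (hba : b ≤ a) (hab : a ≤ b + r) :
    dist ((a : ℝ) / c) (b / c) ≤ r / c := by
  have h₁ : (b : ℝ) ≤ a := by exact_mod_cast hba
  have h₂ : (a : ℝ) ≤ b + r := by exact_mod_cast hab
  rw [Real.dist_eq, ← sub_div, abs_div, abs_of_nonneg hc]
  exact div_le_div_of_nonneg_right (abs_sub_le_iff.2 ⟨by linarith, by linarith⟩) hc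

theorem stmt9_general {α : Type*} (M : Matroid α) [M.Finite] (k m : ℕ)
    (hR : ∀ F A : Set α, M.IsFlat F → M.IsFlat A → F ⊆ A → m ≤ mrk M A →
      k * (mrk M A - mrk M F) ≤ (A \ F).ncard) :
    Metric.hausdorffDist (matCrops M (mrk M M.E : ℝ) k)
        (matCropsDisj M (mrk M M.E : ℝ) k)
      ≤ (k : ℝ) * m / (mrk M M.E : ℝ) := by
  have hr : 0 ≤ (k : ℝ) * m / mrk M M.E := by positivity
  refine Metric.hausdorffDist_le_of_mem_dist hr ?_ ?_
  · rintro _ ⟨A, -, rfl⟩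
    obtain ⟨B, hBE, hBdisj, hB⟩ := Matroid.SatisfiesR.exists_disjoint_approx hR A
    refine ⟨_, ⟨B, hBE, hBdisj, rfl⟩, (dist_pi_le_iff hr).2 fun s => ?_⟩
    simpa only [Nat.cast_mul] using dist_natCast_div_le (Nat.cast_nonneg _) (hB s).1 (hB s).2
  · rintro _ ⟨B, hBE, -, rfl⟩
    exact ⟨_, ⟨B, hBE, rfl⟩, by rwa [dist_self]⟩

/-- If a finite matroid `M` satisfies `R(k,m)` with `m ≥ k ≥ 1`, then
the Hausdorff distance between `T_k(ρ)` and `T_k^Δ(ρ)` is at most `k·m/r(E)`. -/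
theorem stmt9 {α : Type*} (M : Matroid α) [M.Finite] (k m : ℕ)
    (hk : 1 ≤ k) (hkm : k ≤ m)
    (hR : ∀ F A : Set α, M.IsFlat F → M.IsFlat A → F ⊆ A → m ≤ mrk M A →
      k * (mrk M A - mrk M F) ≤ (A \ F).ncard) :
    Metric.hausdorffDist (matCrops M (mrk M M.E : ℝ) k)
        (matCropsDisj M (mrk M M.E : ℝ) k)
      ≤ (k : ℝ) * m / (mrk M M.E : ℝ) :=
  stmt9_general M k m hR
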